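/- Let G be a finite group and R an integral domain whose characteristic is 0 or a prime p with p > |G|. Then V_G, the set of elements of R[G] with zero coefficient at 1_G, is a Mathieu subspace of R[G]. -/

import Mathlib

/-!
Embed `R` into an algebraically closed field `K`. Left multiplication by `a` on `K[G]` has trace
`|G| • a.coeff 1`, so every power of it is traceless. Splitting `K[G]` into generalized eigenspaces
`V_μ`, this says `∑ μ, dim V_μ * μ ^ m = 0` for all `m ≥ 1`, and a Vandermonde argument gives
`dim V_μ * μ = 0`. As `0 < dim V_μ ≤ |G|` is nonzero in `K`, every eigenvalue is `0`, so `a` is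
nilpotent and `b * a ^ m * c = 0` for large `m`.
-/

open Module LinearMap

theorem Finset.eq_zero_of_forall_sum_mul_pow_eq_zero {R : Type*} [CommRing R] [IsDomain R]
    {s : Finset R} {c : R → R} (h : ∀ j < s.card, ∑ x ∈ s, c x * x ^ j = 0) :
    ∀ x ∈ s, c x = 0 := by
  set e := s.equivFin
  have hsum (j : ℕ) : ∑ i, c (e.symm i) * (e.symm i : R) ^ j = ∑ x ∈ s, c x * x ^ j :=
    (e.symm.sum_comp fun x : s ↦ c x * (x : R) ^ j).trans (s.sum_coe_sort fun x ↦ c x * x ^ j)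
  have hzero : (fun i ↦ c (e.symm i)) = 0 :=
    Matrix.eq_zero_of_forall_pow_sum_mul_pow_eq_zero (f := fun i ↦ (e.symm i : R))
      (Subtype.val_injective.comp e.symm.injective) fun j ↦ (hsum j).trans (h j j.isLt)
  intro x hx
  simpa using congrFun hzero (e ⟨x, hx⟩)

namespace Module.End

variable {K V : Type*} [Field K] [AddCommGroup V] [Module K V] [FiniteDimensional K V]

theorem trace_restrict_maxGenEigenspace_pow (φ : End K V) (μ : K) (m : ℕ) :
    trace K _ (φ.restrict (φ.mapsTo_maxGenEigenspace_of_comm rfl μ) ^ m) =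
      finrank K (φ.maxGenEigenspace μ) * μ ^ m := by
  set ψ := φ.restrict (φ.mapsTo_maxGenEigenspace_of_comm rfl μ)
  induction m with
  | zero => simp
  | succ m ih =>
    have hnil : IsNilpotent (ψ - algebraMap K _ μ) :=
      φ.isNilpotent_restrict_maxGenEigenspace_sub_algebraMap μ
        (φ.mapsTo_maxGenEigenspace_of_comm (Algebra.mul_sub_algebraMap_commutes φ μ) μ)
    rw [pow_succ, mul_eq_comp,
      trace_comp_eq_mul_of_commute_of_isNilpotent μ ((Commute.refl ψ).pow_left m) hnil, ih]
    ring

variable [IsAlgClosed K]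

theorem trace_pow_eq_sum_finrank_mul_pow (φ : End K V)
    (hfin : {μ | φ.maxGenEigenspace μ ≠ ⊥}.Finite) (m : ℕ) :
    trace K V (φ ^ m) = ∑ μ ∈ hfin.toFinset, finrank K (φ.maxGenEigenspace μ) * μ ^ m := by
  classical
  have hds : DirectSum.IsInternal φ.maxGenEigenspace :=
    DirectSum.isInternal_submodule_of_iSupIndep_of_iSup_eq_top
      φ.independent_maxGenEigenspace φ.iSup_maxGenEigenspace_eq_top
  rw [trace_eq_sum_trace_restrict' hds hfin
    fun μ ↦ φ.mapsTo_maxGenEigenspace_of_comm ((Commute.refl φ).pow_right m) μ]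
  refine Finset.sum_congr rfl fun μ _ ↦ ?_
  rw [← trace_restrict_maxGenEigenspace_pow]
  exact congrArg (trace K _) (Module.End.pow_restrict m _).symm

theorem isNilpotent_of_forall_trace_pow_eq_zero (φ : End K V)
    (hchar : ∀ d : ℕ, 0 < d → d ≤ finrank K V → (d : K) ≠ 0)
    (htr : ∀ m : ℕ, 0 < m → trace K V (φ ^ m) = 0) :
    IsNilpotent φ := by
  have hfin := WellFoundedGT.finite_ne_bot_of_iSupIndep φ.independent_maxGenEigenspace
  have hweight : ∀ μ ∈ hfin.toFinset, (finrank K (φ.maxGenEigenspace μ) * μ : K) = 0 :=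
    Finset.eq_zero_of_forall_sum_mul_pow_eq_zero fun j _ ↦ by
      rw [← htr (j + 1) j.succ_pos, trace_pow_eq_sum_finrank_mul_pow φ hfin]
      exact Finset.sum_congr rfl fun μ _ ↦ by ring
  have hbot (μ : K) (hμ : μ ≠ 0) : φ.maxGenEigenspace μ = ⊥ := by
    by_contra hne
    have hpos : 0 < finrank K (φ.maxGenEigenspace μ) :=
      Module.finrank_pos_iff.mpr (Submodule.nontrivial_iff_ne_bot.mpr hne)
    exact hchar _ hpos (Submodule.finrank_le _) <|
      (mul_eq_zero.mp (hweight μ (hfin.mem_toFinset.mpr hne))).resolve_right hμ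
  have htop : φ.maxGenEigenspace 0 = ⊤ := by
    rw [eq_top_iff, ← φ.iSup_maxGenEigenspace_eq_top]
    refine iSup_le fun μ ↦ ?_
    rcases eq_or_ne μ 0 with rfl | hμ
    · exact le_rfl
    · exact (hbot μ hμ).symm ▸ bot_le
  refine ((LinearMap.charpoly_nilpotent_tfae φ).out 0 2).mpr fun x ↦ ?_
  obtain ⟨k, hk⟩ := (mem_maxGenEigenspace φ 0 x).mp (htop ▸ Submodule.mem_top)
  exact ⟨k, by simpa using hk⟩

end Module.End

theorem Nat.cast_ne_zero_of_pos_of_lt_ringChar {R : Type*} [NonAssocSemiring R] {d : ℕ}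
    (hd : 0 < d) (h : ringChar R = 0 ∨ d < ringChar R) : (d : R) ≠ 0 := by
  intro hzero
  have hdvd := ringChar.dvd hzero
  rcases h with h | h
  · rw [h, zero_dvd_iff] at hdvd
    exact hd.ne' hdvd
  · exact h.not_ge (Nat.le_of_dvd hd hdvd)

namespace MonoidAlgebra

variable {G : Type*} [Group G] [Fintype G]

theorem trace_mulLeft {k : Type*} [CommRing k] (x : MonoidAlgebra k G) :
    trace k _ (mulLeft k x) = Fintype.card G • x.coeff 1 := by
  classical
  rw [trace_eq_matrix_trace k (basis G k), Matrix.trace]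
  have hdiag (g : G) : (toMatrix (basis G k) (basis G k) (mulLeft k x)).diag g = x.coeff 1 := by
    rw [Matrix.diag_apply, toMatrix_apply]
    change (x * single g 1).coeff g = _
    simp
  simp only [hdiag, Finset.sum_const, Finset.card_univ]

theorem isNilpotent_of_forall_coeff_one_pow_eq_zero_of_isAlgClosed {K : Type*} [Field K]
    [IsAlgClosed K] (hchar : ∀ d : ℕ, 0 < d → d ≤ Fintype.card G → (d : K) ≠ 0)
    {x : MonoidAlgebra K G} (hx : ∀ m : ℕ, 0 < m → (x ^ m).coeff 1 = 0) :
    IsNilpotent x := by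
  have hfinrank : finrank K (MonoidAlgebra K G) = Fintype.card G :=
    finrank_eq_card_basis (basis G K)
  have hmul : IsNilpotent (Algebra.lmul K _ x) :=
    End.isNilpotent_of_forall_trace_pow_eq_zero _ (hfinrank ▸ hchar) fun m hm ↦ by
      rw [← map_pow]
      exact (trace_mulLeft _).trans (by rw [hx m hm, smul_zero])
  exact (IsNilpotent.map_iff Algebra.lmul_injective).mp hmul

theorem isNilpotent_of_forall_coeff_one_pow_eq_zero {R : Type*} [CommRing R] [IsDomain R]
    (hchar : ∀ d : ℕ, 0 < d → d ≤ Fintype.card G → (d : R) ≠ 0)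
    {x : MonoidAlgebra R G} (hx : ∀ m : ℕ, 0 < m → (x ^ m).coeff 1 = 0) :
    IsNilpotent x := by
  have hf : Function.Injective (algebraMap R (AlgebraicClosure (FractionRing R))) := by
    rw [IsScalarTower.algebraMap_eq R (FractionRing R)]
    exact (algebraMap (FractionRing R) _).injective.comp (IsFractionRing.injective R _)
  set f := algebraMap R (AlgebraicClosure (FractionRing R))
  have hmap : Function.Injective (mapRingHom G f) := by
    rw [coe_mapRingHom]
    exact map_injective f.toAddMonoidHom hf
  rw [← IsNilpotent.map_iff hmap]
  refine isNilpotent_of_forall_coeff_one_pow_eq_zero_of_isAlgClosed (fun d hd hle ↦ ?_)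
    fun m hm ↦ by rw [← map_pow, coeff_mapRingHom, hx m hm, map_zero]
  rw [← map_natCast f]
  exact (map_ne_zero_iff f hf).mpr (hchar d hd hle)

end MonoidAlgebra

theorem VG_mathieu_of_char {R G : Type*} [CommRing R] [IsDomain R] [Group G] [Fintype G]
    (hchar : ringChar R = 0 ∨ ((ringChar R).Prime ∧ Fintype.card G < ringChar R)) :
    ∀ a b c : MonoidAlgebra R G, (∀ m : ℕ, 1 ≤ m → (a ^ m).coeff 1 = 0) →
      ∃ N : ℕ, ∀ m : ℕ, N ≤ m → (b * a ^ m * c).coeff 1 = 0 := by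
  intro a b c ha
  obtain ⟨N, hN⟩ := MonoidAlgebra.isNilpotent_of_forall_coeff_one_pow_eq_zero
    (fun d hd hle ↦ Nat.cast_ne_zero_of_pos_of_lt_ringChar hd
      (hchar.imp_right fun h ↦ hle.trans_lt h.2)) ha
  refine ⟨N, fun m hm ↦ ?_⟩
  simp [pow_eq_zero_of_le hm hN]
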